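/- Let G be a reaction graph embedded in ℝ^d and let G^lir be the subgraph of G consisting of all edges whose source and target lie in different strongly connected components of G (together with their endpoints). Then G is endotactic if and only if there exists an endotactic reaction graph Ĝ with G^lir ⊆ Ĝ ⊆ G. -/

import Mathlib

open Matrix Finset
open scoped Matrix Classical

abbrev Vec (d : ℕ) := Fin d → ℝ
abbrev Edge (d : ℕ) := Vec d × Vec d

/-- Sources of edges whose reaction vector is not orthogonal to `u`. -/
def srcU {d : ℕ} (E : Finset (Edge d)) (u : Vec d) : Set (Vec d) :=
  {y | ∃ y', (y, y') ∈ E ∧ (y' - y) ⬝ᵥ u ≠ 0}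

/-- `G` is `u`-endotactic: no `u`-endotacticity violating reaction. -/
def uEndotactic {d : ℕ} (E : Finset (Edge d)) (u : Vec d) : Prop :=
  ¬ ∃ y y', (y, y') ∈ E ∧ 0 < (y' - y) ⬝ᵥ u ∧ ∀ z ∈ srcU E u, z ⬝ᵥ u ≤ y ⬝ᵥ u

def Endotactic {d : ℕ} (E : Finset (Edge d)) : Prop := ∀ u : Vec d, uEndotactic E u

/-- Reachability by a directed path. -/
def Reach {d : ℕ} (E : Finset (Edge d)) : Vec d → Vec d → Prop :=
  Relation.ReflTransGen (fun a b => (a, b) ∈ E)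

def IsEig {d : ℕ} (A : Matrix (Fin d) (Fin d) ℝ) (μ : ℂ) : Prop :=
  ∃ v : Fin d → ℂ, v ≠ 0 ∧ (A.map Complex.ofReal).mulVec v = μ • v

/-- Two vertices lie in the same strongly connected component. -/
def SCCeq {d : ℕ} (E : Finset (Edge d)) (a b : Vec d) : Prop :=
  Reach E a b ∧ Reach E b a

/-!
A `u`-violating reaction `(y, y')` starts at the maximal `u`-level of the sources of
non-orthogonal reactions and climbs strictly above it. Above that level every reaction is
orthogonal to `u`, so no path leads from `y'` back down to `y`: the reaction lies in `G^lir`.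
It stays violating in any subgraph containing it, since the relevant source set only shrinks.
-/

def ViolatesEndotacticity {d : ℕ} (E : Finset (Edge d)) (u : Vec d) (y y' : Vec d) : Prop :=
  (y, y') ∈ E ∧ 0 < (y' - y) ⬝ᵥ u ∧ ∀ z ∈ srcU E u, z ⬝ᵥ u ≤ y ⬝ᵥ u

section

variable {d : ℕ} {E F : Finset (Edge d)} {u : Vec d}

theorem srcU_mono (h : F ⊆ E) : srcU F u ⊆ srcU E u :=
  fun _ ⟨y', hy', hne⟩ => ⟨y', h hy', hne⟩

theorem lt_dotProduct_of_reach {c : ℝ} (hc : ∀ z ∈ srcU E u, z ⬝ᵥ u ≤ c) {a b : Vec d}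
    (ha : c < a ⬝ᵥ u) (hab : Reach E a b) : c < b ⬝ᵥ u := by
  induction hab with
  | refl => exact ha
  | @tail x z _ hxz ih =>
    have horth : (z - x) ⬝ᵥ u = 0 := by
      by_contra hne
      exact (hc x ⟨z, hxz, hne⟩).not_gt ih
    rw [sub_dotProduct, sub_eq_zero] at horth
    rwa [horth]

theorem ViolatesEndotacticity.not_sccEq {y y' : Vec d} (h : ViolatesEndotacticity E u y y') :
    ¬ SCCeq E y y' := by
  obtain ⟨-, hpos, hmax⟩ := h
  rw [sub_dotProduct, sub_pos] at hpos
  exact fun ⟨_, hback⟩ => (lt_dotProduct_of_reach hmax hpos hback).false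

theorem ViolatesEndotacticity.mono {y y' : Vec d} (h : ViolatesEndotacticity E u y y')
    (hFE : F ⊆ E) (hF : (y, y') ∈ F) : ViolatesEndotacticity F u y y' :=
  ⟨hF, h.2.1, fun z hz => h.2.2 z (srcU_mono hFE hz)⟩

end

theorem stmt7_general {d : ℕ} (E : Finset (Edge d)) :
    Endotactic E ↔ ∃ Ehat : Finset (Edge d), Ehat ⊆ E ∧
      (∀ e ∈ E, ¬ SCCeq E e.1 e.2 → e ∈ Ehat) ∧ Endotactic Ehat := by
  constructor
  · exact fun h => ⟨E, Subset.refl E, fun e he _ => he, h⟩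
  · rintro ⟨Ehat, hsub, hlir, hend⟩ u ⟨y, y', hviol⟩
    have hviol : ViolatesEndotacticity E u y y' := hviol
    exact hend u ⟨y, y', hviol.mono hsub (hlir (y, y') hviol.1 hviol.not_sccEq)⟩

/-- `G` is endotactic iff some endotactic reaction graph `Ĝ` satisfies
`G^lir ⊆ Ĝ ⊆ G`, where `G^lir` consists of the edges whose endpoints lie in
different strongly connected components of `G`. -/
theorem stmt7 {d : ℕ} (E : Finset (Edge d)) (hsimple : ∀ e ∈ E, e.1 ≠ e.2) :
    Endotactic E ↔ ∃ Ehat : Finset (Edge d), Ehat ⊆ E ∧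
      (∀ e ∈ E, ¬ SCCeq E e.1 e.2 → e ∈ Ehat) ∧ Endotactic Ehat :=
  stmt7_general E
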